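/- For every infinite cardinal κ satisfying κ^{<κ} = κ, there exists a simple graph W on a vertex set of cardinality κ that is universal for graphs of cardinality at most κ: every simple graph on a vertex set of cardinality at most κ admits a graph embedding into W (i.e., is isomorphic to an induced subgraph of W). -/

import Mathlib

/-!
If `κ ^< κ = κ` then `κ` is regular and a set of size `κ` has only `κ` subsets of size `< κ`.
Well-order `κ` vertices in type `κ.ord` and let every vertex `z` code a pair `(X, Y)` of small
sets, each pair being coded by `κ` vertices; join `z` to the elements of `X` below it. By
regularity some vertex coding `(X, Y)` lies above `X ∪ Y`, so whenever `X` and `Y` are disjoint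
it is adjacent to all of `X` and to none of `Y`. A graph with this extension property absorbs
every graph of size `≤ κ`: embed it by transfinite recursion along a well-order whose initial
segments have size `< κ`, sending each vertex to a witness for the images of its earlier
neighbours and non-neighbours.
-/

open Cardinal Set

universe u

namespace Cardinal

theorem isRegular_of_powerlt_eq_self {κ : Cardinal} (hκ : ℵ₀ ≤ κ) (hpow : κ ^< κ = κ) :
    κ.IsRegular := by
  refine ⟨hκ, not_lt.1 fun hcof => ?_⟩
  have := (lt_power_cof_ord hκ).trans_le (le_powerlt κ hcof)
  exact this.ne hpow.symm

section LinearOrder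

variable {V : Type u} [LinearOrder V] {κ : Cardinal.{u}}

theorem mk_biUnion_Iic_lt (hκ : κ.IsRegular) (hseg : ∀ v : V, #(Iio v) < κ) {S : Set V}
    (hS : #S < κ) : #(⋃ s ∈ S, Iic s) < κ := by
  refine (card_biUnion_lt_iff_forall_of_isRegular hκ hS).2 fun s _ => ?_
  rw [← Iio_insert]
  exact mk_insert_le.trans_lt <|
    add_lt_of_lt hκ.aleph0_le (hseg s) (one_lt_aleph0.trans_le hκ.aleph0_le)

theorem exists_mem_forall_lt_of_le_mk (hκ : κ.IsRegular) (hseg : ∀ v : V, #(Iio v) < κ)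
    {S F : Set V} (hS : #S < κ) (hF : κ ≤ #F) : ∃ z ∈ F, ∀ s ∈ S, s < z := by
  obtain ⟨z, hzF, hz⟩ := not_subset.1 fun h : F ⊆ ⋃ s ∈ S, Iic s =>
    (hF.trans (mk_le_mk_of_subset h)).not_gt (mk_biUnion_Iic_lt hκ hseg hS)
  simp only [mem_iUnion₂, mem_Iic, not_exists, not_le] at hz
  exact ⟨z, hzF, hz⟩

theorem mk_setOf_mk_lt_le (hκ : κ.IsRegular) (hpow : κ ^< κ = κ) (hV : #V = κ)
    (hseg : ∀ v : V, #(Iio v) < κ) : #{s : Set V | #s < κ} ≤ κ := by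
  have hsub : {s : Set V | #s < κ} ⊆ ⋃ b, 𝒫 (Iio b) := fun s hs => by
    obtain ⟨b, -, hb⟩ :=
      exists_mem_forall_lt_of_le_mk hκ hseg hs (F := Set.univ) (by rw [mk_univ, hV])
    exact mem_iUnion.2 ⟨b, hb⟩
  have hpowerset (b : V) : #(𝒫 (Iio b)) ≤ κ := calc
    #(𝒫 (Iio b)) = 2 ^ #(Iio b) := mk_powerset _
    _ ≤ κ ^ #(Iio b) :=
      power_le_power_right ((natCast_lt_aleph0 (n := 2)).le.trans hκ.aleph0_le)
    _ ≤ κ ^< κ := le_powerlt κ (hseg b)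
    _ = κ := hpow
  calc #{s : Set V | #s < κ} ≤ #(⋃ b, 𝒫 (Iio b)) := mk_le_mk_of_subset hsub
    _ ≤ #V * ⨆ b, #(𝒫 (Iio b)) := mk_iUnion_le _
    _ ≤ κ * κ := by rw [hV]; exact mul_le_mul_right (ciSup_le' hpowerset) κ
    _ = κ := mul_eq_self hκ.aleph0_le

end LinearOrder

theorem exists_le_mk_preimage_singleton {α β : Type u} [Nonempty β] (hα : ℵ₀ ≤ #α)
    (hβ : #β ≤ #α) : ∃ c : α → β, ∀ b, #α ≤ #(c ⁻¹' {b}) := by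
  obtain ⟨e⟩ : Nonempty (α ≃ α × β) :=
    Cardinal.eq.1 (by rw [mk_prod, lift_id, lift_id, mul_eq_left hα hβ (mk_ne_zero β)])
  refine ⟨fun a => (e a).2, fun b => ?_⟩
  refine mk_le_of_injective (f := fun a => ⟨e.symm (a, b), by simp⟩) fun a a' h => ?_
  simpa using congrArg Subtype.val h

end Cardinal

theorem WellFoundedLT.exists_fix_image {α β : Type*} [Preorder α] [WellFoundedLT α]
    (F : α → (Set α → Set β) → β) : ∃ f : α → β, ∀ a, f a = F a fun s => f '' (Iio a ∩ s) := by
  refine ⟨wellFounded_lt.fix fun a ih => F a fun s => {v | ∃ b, ∃ h : b < a, b ∈ s ∧ ih b h = v},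
    fun a => ?_⟩
  rw [WellFounded.fix_eq]
  congr 1
  ext s v
  simp only [mem_ofPred_eq, mem_image, mem_inter_iff, mem_Iio]
  exact ⟨fun ⟨b, hba, hbs, h⟩ => ⟨b, ⟨hba, hbs⟩, h⟩, fun ⟨b, ⟨hba, hbs⟩, h⟩ => ⟨b, hba, hbs, h⟩⟩

namespace SimpleGraph

variable {V : Type u}

def HasExtensionProperty (G : SimpleGraph V) (κ : Cardinal.{u}) : Prop :=
  ∀ X Y : Set V, #X < κ → #Y < κ → Disjoint X Y →
    ∃ z ∉ Y, (∀ x ∈ X, G.Adj z x) ∧ ∀ y ∈ Y, ¬ G.Adj z y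

theorem hasExtensionProperty_fromRel [LinearOrder V] {κ : Cardinal.{u}} (A : V → Set V)
    (hA : ∀ X Y : Set V, #X < κ → #Y < κ → ∃ z, A z = X ∧ ∀ w ∈ X ∪ Y, w < z) :
    (fromRel fun u v => u < v ∧ u ∈ A v).HasExtensionProperty κ := by
  intro X Y hX hY hXY
  obtain ⟨z, rfl, hz⟩ := hA X Y hX hY
  refine ⟨z, fun hzY => (hz z (Or.inr hzY)).false, fun x hx => ?_, fun y hy => ?_⟩
  · have hxz := hz x (Or.inl hx)
    exact (fromRel_adj _ _ _).2 ⟨hxz.ne', Or.inr ⟨hxz, hx⟩⟩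
  · rw [fromRel_adj]
    rintro ⟨-, ⟨hzy, -⟩ | ⟨-, hyA⟩⟩
    · exact (hz y (Or.inr hy)).asymm hzy
    · exact Set.disjoint_left.1 hXY hyA hy

theorem exists_hasExtensionProperty {κ : Cardinal.{u}} (hκ : ℵ₀ ≤ κ) (hpow : κ ^< κ = κ)
    (hV : #V = κ) : ∃ W : SimpleGraph V, W.HasExtensionProperty κ := by
  have hreg := isRegular_of_powerlt_eq_self hκ hpow
  obtain ⟨_, _, hord⟩ := exists_ord_eq_type_lt V
  have hseg (v : V) : #(Iio v) < κ := hV ▸ mk_Iio_lt v hord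
  let Small := {s : Set V | #s < κ}
  have hSmall : #(Small × Small) ≤ #V := by
    rw [mk_prod, lift_id, hV]
    exact (mul_le_mul' (mk_setOf_mk_lt_le hreg hpow hV hseg)
      (mk_setOf_mk_lt_le hreg hpow hV hseg)).trans (mul_eq_self hκ).le
  have : Nonempty Small := ⟨⟨∅, show #(∅ : Set V) < κ by simpa using aleph0_pos.trans_le hκ⟩⟩
  obtain ⟨c, hc⟩ := exists_le_mk_preimage_singleton (hV ▸ hκ) hSmall
  refine ⟨_, hasExtensionProperty_fromRel (fun v => (c v).1) fun X Y hX hY => ?_⟩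
  obtain ⟨z, hz, hXY⟩ := exists_mem_forall_lt_of_le_mk hreg hseg
    ((mk_union_le X Y).trans_lt (add_lt_of_lt hκ hX hY)) (hV ▸ hc (⟨X, hX⟩, ⟨Y, hY⟩))
  rw [mem_preimage, mem_singleton_iff] at hz
  exact ⟨z, by rw [hz], hXY⟩

noncomputable def extensionWitness [Nonempty V] (W : SimpleGraph V) (X Y : Set V) : V :=
  Classical.epsilon fun z => z ∉ Y ∧ (∀ x ∈ X, W.Adj z x) ∧ ∀ y ∈ Y, ¬ W.Adj z y

theorem nonempty_embedding_of_forall_lt {α : Type*} [LinearOrder α] {T : SimpleGraph α}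
    {W : SimpleGraph V} (f : α → V)
    (hf : ∀ a, ∀ b < a, f b ≠ f a ∧ (W.Adj (f a) (f b) ↔ T.Adj a b)) : Nonempty (T ↪g W) := by
  refine ⟨⟨⟨f, fun a b hab => ?_⟩, fun {a b} => ?_⟩⟩
  · by_contra hne
    rcases lt_or_gt_of_ne hne with h | h
    · exact (hf b a h).1 hab
    · exact (hf a b h).1 hab.symm
  · rcases lt_trichotomy a b with h | rfl | h
    · exact W.adj_comm _ _ |>.trans (hf b a h).2 |>.trans (T.adj_comm _ _)
    · simp
    · exact (hf a b h).2

namespace HasExtensionProperty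

variable {W : SimpleGraph V} {κ : Cardinal.{u}}

theorem extensionWitness_spec [Nonempty V] (hW : W.HasExtensionProperty κ) {X Y : Set V}
    (hX : #X < κ) (hY : #Y < κ) (hXY : Disjoint X Y) :
    W.extensionWitness X Y ∉ Y ∧ (∀ x ∈ X, W.Adj (W.extensionWitness X Y) x) ∧
      ∀ y ∈ Y, ¬ W.Adj (W.extensionWitness X Y) y :=
  Classical.epsilon_spec (hW X Y hX hY hXY)

theorem forall_lt_ne_and_adj_iff [Nonempty V] {α : Type u} [LinearOrder α] [WellFoundedLT α]
    (hW : W.HasExtensionProperty κ) (hα : ∀ a : α, #(Iio a) < κ) {T : SimpleGraph α}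
    {f : α → V} (hf : ∀ a, f a = W.extensionWitness (f '' (Iio a ∩ {b | T.Adj a b}))
      (f '' (Iio a ∩ {b | ¬ T.Adj a b}))) (a : α) :
    ∀ b < a, f b ≠ f a ∧ (W.Adj (f a) (f b) ↔ T.Adj a b) := by
  induction a using WellFoundedLT.induction with | _ a ih => ?_
  have hinj : InjOn f (Iio a) := fun b hb c hc hbc => by
    by_contra hne
    rcases lt_or_gt_of_ne hne with h | h
    · exact (ih c hc b h).1 hbc
    · exact (ih b hb c h).1 hbc.symm
  have hsmall (s : Set α) : #(f '' (Iio a ∩ s)) < κ :=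
    mk_image_le.trans_lt ((mk_le_mk_of_subset inter_subset_left).trans_lt (hα a))
  have hdisj : Disjoint (f '' (Iio a ∩ {b | T.Adj a b})) (f '' (Iio a ∩ {b | ¬ T.Adj a b})) :=
    disjoint_image_image fun b hb c hc => hinj.ne hb.1 hc.1 fun hbc => hc.2 (hbc ▸ hb.2)
  obtain ⟨hY, hX, hnY⟩ := hf a ▸ hW.extensionWitness_spec (hsmall _) (hsmall _) hdisj
  intro b hb
  by_cases hab : T.Adj a b
  · have hadj : W.Adj (f a) (f b) := hX _ ⟨b, ⟨hb, hab⟩, rfl⟩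
    exact ⟨hadj.ne', iff_of_true hadj hab⟩
  · have hbY : f b ∈ f '' (Iio a ∩ {b | ¬ T.Adj a b}) := ⟨b, ⟨hb, hab⟩, rfl⟩
    exact ⟨fun h => hY (h ▸ hbY), iff_of_false (hnY _ hbY) hab⟩

theorem nonempty_embedding [Nonempty V] {α : Type u} [LinearOrder α] [WellFoundedLT α]
    (hW : W.HasExtensionProperty κ) (hα : ∀ a : α, #(Iio a) < κ) (T : SimpleGraph α) :
    Nonempty (T ↪g W) := by
  obtain ⟨f, hf⟩ := WellFoundedLT.exists_fix_image fun a img =>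
    W.extensionWitness (img {b | T.Adj a b}) (img {b | ¬ T.Adj a b})
  exact nonempty_embedding_of_forall_lt f (hW.forall_lt_ne_and_adj_iff hα hf)

end HasExtensionProperty

end SimpleGraph

/-- For every infinite cardinal `κ` with `κ^{<κ} = κ` there is a simple graph on a vertex
set of cardinality `κ` which is universal for graphs of cardinality at most `κ`:
every simple graph on a vertex set of cardinality `≤ κ` admits a graph embedding into it. -/
theorem exists_universal_graph (κ : Cardinal.{0}) (hκ : ℵ₀ ≤ κ) (hpow : κ ^< κ = κ) :
    ∃ W : SimpleGraph κ.out,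
      ∀ (α : Type) (T : SimpleGraph α), #α ≤ κ → Nonempty (T ↪g W) := by
  obtain ⟨W, hW⟩ := SimpleGraph.exists_hasExtensionProperty hκ hpow (mk_out κ)
  have : Nonempty κ.out := mk_ne_zero_iff.1 <| (mk_out κ).symm ▸ (aleph0_pos.trans_le hκ).ne'
  refine ⟨W, fun α T hα => ?_⟩
  obtain ⟨_, _, hord⟩ := exists_ord_eq_type_lt α
  exact hW.nonempty_embedding (fun a => (mk_Iio_lt a hord).trans_le hα) T
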